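/- arXiv:2007.10673 — 5 statements merged into one kernel-verified Lean document; each statement's English description precedes it below -/
import Mathlib

section
/- Let k ≥ 1 and let P ∈ ℝ_{≥0}^{n×m} be a nonnegative matrix whose entries sum to 1 (a classical correlation), and suppose r = rank_psd^{(k)}(P). Then there exist a probability distribution (p_1,…,p_r) with p_l > 0 for all l, and nonnegative matrices P_1,…,P_r ∈ ℝ_{≥0}^{n×m}, each with entries summing to 1 and with PSD-rank prank(P_l) ≤ k, such that P = Σ_{l=1}^r p_l P_l. -/
open Matrix BigOperators Kronecker
open scoped ComplexOrder

/-- `P` admits a PSD factorization of size `r`: there are `r × r` complex positive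
semidefinite matrices `C i` (one per row index) and `D j` (one per column index) with
`P i j = tr (C i * D j)`. -/
def HasPsdFac {α β : Type} [Fintype α] [Fintype β] (P : Matrix α β ℝ) (r : ℕ) : Prop :=
  ∃ (C : α → Matrix (Fin r) (Fin r) ℂ) (D : β → Matrix (Fin r) (Fin r) ℂ),
    (∀ i, (C i).PosSemidef) ∧ (∀ j, (D j).PosSemidef) ∧
      ∀ i j, (P i j : ℂ) = ((C i) * (D j)).trace

/-- The PSD-rank of a nonnegative matrix: the least size of a PSD factorization. -/
noncomputable def prank {α β : Type} [Fintype α] [Fintype β] (P : Matrix α β ℝ) : ℕ :=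
  sInf {r | HasPsdFac P r}

/-- `P` admits a `k`-block PSD factorization of size `r`: there are `k × k` complex
positive semidefinite matrices `C i l`, `D j l` (`l ∈ [r]`) with
`P i j = ∑ l, tr (C i l * D j l)`. -/
def HasBlockPsdFac {α β : Type} [Fintype α] [Fintype β] (k : ℕ)
    (P : Matrix α β ℝ) (r : ℕ) : Prop :=
  ∃ (C : α → Fin r → Matrix (Fin k) (Fin k) ℂ)
    (D : β → Fin r → Matrix (Fin k) (Fin k) ℂ),
    (∀ i l, (C i l).PosSemidef) ∧ (∀ j l, (D j l).PosSemidef) ∧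
      ∀ i j, (P i j : ℂ) = ∑ l, ((C i l) * (D j l)).trace

/-- The `k`-block PSD rank of a nonnegative matrix:
the least size of a `k`-block PSD factorization. -/
noncomputable def kprank {α β : Type} [Fintype α] [Fintype β] (k : ℕ)
    (P : Matrix α β ℝ) : ℕ :=
  sInf {r | HasBlockPsdFac k P r}

/-- The nonnegative rank of a nonnegative matrix: the least `r` such that `P` is a sum
of `r` nonnegative rank-one matrices (outer products of nonnegative vectors). -/
noncomputable def nnRank {α β : Type} [Fintype α] [Fintype β] (P : Matrix α β ℝ) : ℕ :=
  sInf {r | ∃ (u : Fin r → α → ℝ) (v : Fin r → β → ℝ),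
    (∀ l i, 0 ≤ u l i) ∧ (∀ l j, 0 ≤ v l j) ∧ ∀ i j, P i j = ∑ l, u l i * v l j}

/-!
A `k`-block PSD factorization of size `r` is the same as a decomposition `P = ∑ₗ Qₗ` into `r`
matrices of PSD-rank at most `k`; such matrices are entrywise nonnegative, since the trace of a
product of PSD matrices is nonnegative. When `r` is the `k`-block PSD rank no `Qₗ` vanishes
(dropping it would give a smaller factorization), so the entry sums `pₗ` of the `Qₗ` are positive
and add up to the entry sum `1` of `P`, and `P = ∑ₗ pₗ (pₗ⁻¹ Qₗ)` is the required convex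
decomposition.
-/

namespace Matrix.PosSemidef

open scoped MatrixOrder in
theorem trace_mul_nonneg {𝕜 n : Type*} [RCLike 𝕜] [Fintype n] {A B : Matrix n n 𝕜}
    (hA : A.PosSemidef) (hB : B.PosSemidef) : 0 ≤ (A * B).trace := by
  classical
  obtain ⟨M, rfl⟩ := CStarAlgebra.nonneg_iff_eq_star_mul_self.mp hB.nonneg
  rw [star_eq_conjTranspose, ← Matrix.mul_assoc, trace_mul_cycle]
  exact (hA.mul_mul_conjTranspose_same M).trace_nonneg

end Matrix.PosSemidef

section

variable {α β : Type} [Fintype α] [Fintype β] {k : ℕ}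

theorem HasPsdFac.nonneg {Q : Matrix α β ℝ} (hQ : HasPsdFac Q k) (i : α) (j : β) :
    0 ≤ Q i j := by
  obtain ⟨C, D, hC, hD, hCD⟩ := hQ
  exact Complex.zero_le_real.mp (hCD i j ▸ (hC i).trace_mul_nonneg (hD j))

theorem HasPsdFac.smul {Q : Matrix α β ℝ} (hQ : HasPsdFac Q k) {c : ℝ} (hc : 0 ≤ c) :
    HasPsdFac (c • Q) k := by
  obtain ⟨C, D, hC, hD, hCD⟩ := hQ
  refine ⟨fun i => c • C i, D, fun i => (hC i).smul hc, hD, fun i j => ?_⟩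
  simp [hCD, Matrix.trace_smul, Complex.real_smul]

theorem hasPsdFac_vecMulVec (hk : 1 ≤ k) {u : α → ℝ} {v : β → ℝ} (hu : 0 ≤ u) (hv : 0 ≤ v) :
    HasPsdFac (vecMulVec u v) k := by
  let z : Fin k := ⟨0, hk⟩
  refine ⟨fun i => diagonal (Pi.single z (u i : ℂ)), fun j => diagonal (Pi.single z (v j : ℂ)),
    fun i => .diagonal ?_, fun j => .diagonal ?_, fun i j => ?_⟩
  · exact Pi.single_nonneg.mpr (Complex.zero_le_real.mpr (hu i))
  · exact Pi.single_nonneg.mpr (Complex.zero_le_real.mpr (hv j))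
  · simp [vecMulVec_apply, diagonal_mul_diagonal, trace_diagonal, Pi.single_apply]

theorem hasBlockPsdFac_iff {P : Matrix α β ℝ} {r : ℕ} :
    HasBlockPsdFac k P r ↔
      ∃ Q : Fin r → Matrix α β ℝ, (∀ l, HasPsdFac (Q l) k) ∧ P = ∑ l, Q l := by
  constructor
  · rintro ⟨C, D, hC, hD, hCD⟩
    have hre : ∀ i j l, (((C i l * D j l).trace.re : ℝ) : ℂ) = (C i l * D j l).trace :=
      fun i j l => (Complex.eq_re_of_ofReal_le ((hC i l).trace_mul_nonneg (hD j l))).symm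
    refine ⟨fun l => of fun i j => (C i l * D j l).trace.re,
      fun l => ⟨fun i => C i l, fun j => D j l, fun i => hC i l, fun j => hD j l,
        fun i j => hre i j l⟩, ?_⟩
    ext i j
    apply Complex.ofReal_injective
    simp [Matrix.sum_apply, hCD, hre]
  · rintro ⟨Q, hQ, rfl⟩
    choose C D hC hD hCD using hQ
    refine ⟨fun i l => C l i, fun j l => D l j, fun i l => hC l i, fun j l => hD l j,
      fun i j => ?_⟩
    simp [Matrix.sum_apply, hCD]

theorem exists_hasBlockPsdFac (hk : 1 ≤ k) {P : Matrix α β ℝ} (hP : ∀ i j, 0 ≤ P i j) :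
    ∃ r, HasBlockPsdFac k P r := by
  classical
  let e := Fintype.equivFin α
  refine ⟨Fintype.card α, hasBlockPsdFac_iff.mpr
    ⟨fun l => vecMulVec (Pi.single (e.symm l) 1) (P (e.symm l)),
      fun l => hasPsdFac_vecMulVec hk (Pi.single_nonneg.mpr zero_le_one) (hP _), ?_⟩⟩
  rw [Equiv.sum_comp e.symm (fun i => vecMulVec (Pi.single i 1) (P i))]
  ext i j
  simp [Matrix.sum_apply, vecMulVec_apply, Pi.single_apply]

theorem hasBlockPsdFac_kprank (hk : 1 ≤ k) {P : Matrix α β ℝ} (hP : ∀ i j, 0 ≤ P i j) :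
    HasBlockPsdFac k P (kprank k P) :=
  Nat.sInf_mem (exists_hasBlockPsdFac hk hP)

theorem kprank_lt_of_summand_eq_zero {P : Matrix α β ℝ} {r : ℕ} {Q : Fin r → Matrix α β ℝ}
    (hQ : ∀ l, HasPsdFac (Q l) k) (hPQ : P = ∑ l, Q l) {l : Fin r} (hl : Q l = 0) :
    kprank k P < r := by
  obtain ⟨r, rfl⟩ := Nat.exists_eq_add_one_of_ne_zero l.pos.ne'
  have : HasBlockPsdFac k P r := hasBlockPsdFac_iff.mpr
    ⟨fun l' => Q (l.succAbove l'), fun l' => hQ _, by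
      rw [hPQ, Fin.sum_univ_succAbove _ l, hl, zero_add]⟩
  exact Nat.lt_add_one_of_le (Nat.sInf_le this)

end

theorem Matrix.sum_entries_pos {α β : Type*} [Fintype α] [Fintype β] {Q : Matrix α β ℝ}
    (hQ : ∀ i j, 0 ≤ Q i j) (h : Q ≠ 0) : 0 < ∑ i, ∑ j, Q i j := by
  obtain ⟨i, j, hij⟩ : ∃ i j, Q i j ≠ 0 := by
    by_contra! h'
    exact h (Matrix.ext h')
  exact Finset.sum_pos' (fun i _ => Finset.sum_nonneg fun j _ => hQ i j)
    ⟨i, Finset.mem_univ _, Finset.sum_pos' (fun j _ => hQ i j)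
      ⟨j, Finset.mem_univ _, (hQ i j).lt_of_ne' hij⟩⟩

theorem Matrix.sum_entries_sum {ι α β : Type*} [Fintype α] [Fintype β] (s : Finset ι)
    (Q : ι → Matrix α β ℝ) :
    ∑ i, ∑ j, (∑ l ∈ s, Q l) i j = ∑ l ∈ s, ∑ i, ∑ j, Q l i j := by
  simp only [Matrix.sum_apply]
  rw [Finset.sum_comm (s := s)]
  exact Finset.sum_congr rfl fun i _ => Finset.sum_comm

theorem stmt1 {n m k : ℕ} (hk : 1 ≤ k)
    (P : Matrix (Fin n) (Fin m) ℝ) (hP : ∀ i j, 0 ≤ P i j)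
    (hPsum : ∑ i, ∑ j, P i j = 1)
    (r : ℕ) (hr : r = kprank k P) :
    ∃ (p : Fin r → ℝ) (Q : Fin r → Matrix (Fin n) (Fin m) ℝ),
      (∀ l, 0 < p l) ∧ (∑ l, p l = 1) ∧
      (∀ l x y, 0 ≤ Q l x y) ∧ (∀ l, ∑ x, ∑ y, Q l x y = 1) ∧
      (∀ l, prank (Q l) ≤ k) ∧ P = ∑ l, p l • Q l := by
  obtain ⟨Q, hQ, hPQ⟩ := hasBlockPsdFac_iff.mp (hr ▸ hasBlockPsdFac_kprank hk hP)
  have hQ0 : ∀ l, Q l ≠ 0 := fun l hl => (kprank_lt_of_summand_eq_zero hQ hPQ hl).ne' hr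
  set p : Fin r → ℝ := fun l => ∑ i, ∑ j, Q l i j
  have hp : ∀ l, 0 < p l := fun l => sum_entries_pos (hQ l).nonneg (hQ0 l)
  refine ⟨p, fun l => (p l)⁻¹ • Q l, hp, ?_, fun l i j => ?_, fun l => ?_, fun l => ?_, ?_⟩
  · rw [← hPsum, hPQ, sum_entries_sum]
  · exact mul_nonneg (inv_nonneg.mpr (hp l).le) ((hQ l).nonneg i j)
  · simp only [Matrix.smul_apply, smul_eq_mul, ← Finset.mul_sum]
    exact inv_mul_cancel₀ (hp l).ne'
  · exact Nat.sInf_le ((hQ l).smul (inv_nonneg.mpr (hp l).le))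
  · simp only [smul_inv_smul₀ (hp _).ne', hPQ]
end

section
/- Let k ≥ 1 and let P ∈ ℝ_{≥0}^{n×m} be a nonnegative matrix whose entries sum to 1. Suppose there exist pairwise disjoint combinatorial rectangles X_1×Y_1, …, X_t×Y_t (with X_a ⊆ [n], Y_a ⊆ [m]) whose union contains the positions of all nonzero entries of P, and such that for each a the submatrix of P indexed by X_a×Y_a has PSD-rank at most k. Then rank_psd^{(k)}(P) ≤ t. -/
open Matrix BigOperators Kronecker
open scoped ComplexOrder

/-! Every rectangle's submatrix has a PSD factorization of size exactly `k` (pad a minimal one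
by an isometry). Extending its factors by zero outside the rectangle gives one `k × k` block per
rectangle; on each nonzero entry of `P` exactly one block is active, by covering and
disjointness, so the blocks sum to `P`. -/

theorem hasPsdFac_card {α β : Type} [Fintype α] [Fintype β] (Q : Matrix α β ℝ)
    (hQ : ∀ i j, 0 ≤ Q i j) : HasPsdFac Q (Fintype.card β) := by
  classical
  set e := Fintype.equivFin β
  refine ⟨fun i => diagonal fun l => (Q i (e.symm l) : ℂ),
    fun j => diagonal fun l => if l = e j then 1 else 0, ?_, ?_, ?_⟩
  · intro i
    rw [posSemidef_diagonal_iff]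
    exact fun l => mod_cast hQ i (e.symm l)
  · intro j
    rw [posSemidef_diagonal_iff]
    intro l
    split <;> norm_num
  · intro i j
    rw [diagonal_mul_diagonal, trace_diagonal, Finset.sum_eq_single (e j)] <;> simp_all

theorem HasPsdFac.mono {α β : Type} [Fintype α] [Fintype β] {Q : Matrix α β ℝ} {r k : ℕ}
    (h : HasPsdFac Q r) (hrk : r ≤ k) : HasPsdFac Q k := by
  obtain ⟨C, D, hC, hD, hQ⟩ := h
  set A : Matrix (Fin k) (Fin r) ℂ := (1 : Matrix (Fin k) (Fin k) ℂ).submatrix id (Fin.castLE hrk)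
  have hA : Aᴴ * A = 1 := by
    rw [conjTranspose_submatrix, conjTranspose_one,
      ← submatrix_mul _ _ _ id _ Function.bijective_id, Matrix.one_mul,
      submatrix_one _ (Fin.castLE_injective hrk)]
  refine ⟨fun i => A * C i * Aᴴ, fun j => A * D j * Aᴴ,
    fun i => (hC i).mul_mul_conjTranspose_same A,
    fun j => (hD j).mul_mul_conjTranspose_same A, fun i j => ?_⟩
  calc (Q i j : ℂ) = (Aᴴ * A * (C i * (Aᴴ * A) * D j)).trace := by
        rw [hA, Matrix.one_mul, Matrix.mul_one, hQ]
    _ = (A * C i * Aᴴ * (A * D j * Aᴴ)).trace := by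
        rw [Matrix.mul_assoc, trace_mul_comm]
        simp only [Matrix.mul_assoc]

theorem HasPsdFac.of_prank_le {α β : Type} [Fintype α] [Fintype β] {Q : Matrix α β ℝ} {k : ℕ}
    (hQ : ∀ i j, 0 ≤ Q i j) (hk : prank Q ≤ k) : HasPsdFac Q k :=
  HasPsdFac.mono (Nat.sInf_mem (s := {r | HasPsdFac Q r}) ⟨_, hasPsdFac_card Q hQ⟩) hk

theorem sum_ite_mem_rectangles {α β ι M : Type} [DecidableEq α] [DecidableEq β] [Fintype ι]
    [AddCommMonoid M] (f : α → β → M) (X : ι → Finset α) (Y : ι → Finset β)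
    (hdisj : ∀ a b, a ≠ b → ∀ i j, i ∈ X a → j ∈ Y a → ¬ (i ∈ X b ∧ j ∈ Y b))
    (hcover : ∀ i j, f i j ≠ 0 → ∃ a, i ∈ X a ∧ j ∈ Y a) (i : α) (j : β) :
    ∑ a, (if i ∈ X a ∧ j ∈ Y a then f i j else 0) = f i j := by
  by_cases hf : f i j = 0
  · simp [hf]
  obtain ⟨a, ha⟩ := hcover i j hf
  rw [Finset.sum_eq_single a (fun b _ hb => if_neg (hdisj a b hb.symm i j ha.1 ha.2))
    (fun h => (h (Finset.mem_univ a)).elim), if_pos ha]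

theorem HasBlockPsdFac.of_rectangles {α β : Type} [Fintype α] [Fintype β] {k t : ℕ}
    (P : Matrix α β ℝ) (X : Fin t → Finset α) (Y : Fin t → Finset β)
    (hdisj : ∀ a b, a ≠ b → ∀ i j, i ∈ X a → j ∈ Y a → ¬ (i ∈ X b ∧ j ∈ Y b))
    (hcover : ∀ i j, P i j ≠ 0 → ∃ a, i ∈ X a ∧ j ∈ Y a)
    (hfac : ∀ a, HasPsdFac (P.submatrix (fun i : X a => (i : α)) (fun j : Y a => (j : β))) k) :
    HasBlockPsdFac k P t := by
  classical
  choose C D hC hD hCD using hfac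
  refine ⟨fun i a => if h : i ∈ X a then C a ⟨i, h⟩ else 0,
    fun j a => if h : j ∈ Y a then D a ⟨j, h⟩ else 0,
    fun i a => ?_, fun j a => ?_, fun i j => ?_⟩
  · dsimp only
    split
    exacts [hC a _, .zero]
  · dsimp only
    split
    exacts [hD a _, .zero]
  have htrace : ∀ a, ((if h : i ∈ X a then C a ⟨i, h⟩ else 0) *
      (if h : j ∈ Y a then D a ⟨j, h⟩ else 0)).trace =
      if i ∈ X a ∧ j ∈ Y a then (P i j : ℂ) else 0 := by
    intro a
    by_cases hi : i ∈ X a <;> by_cases hj : j ∈ Y a <;> simp [hi, hj, ← hCD]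
  simp only [htrace]
  exact (sum_ite_mem_rectangles (fun i j => (P i j : ℂ)) X Y hdisj
    (fun i j h => hcover i j (by exact_mod_cast h)) i j).symm

theorem stmt4_general {n m k t : ℕ}
    (P : Matrix (Fin n) (Fin m) ℝ) (hP : ∀ i j, 0 ≤ P i j)
    (X : Fin t → Finset (Fin n)) (Y : Fin t → Finset (Fin m))
    (hdisj : ∀ a b, a ≠ b →
      ∀ (i : Fin n) (j : Fin m), i ∈ X a → j ∈ Y a → ¬ (i ∈ X b ∧ j ∈ Y b))
    (hcover : ∀ (i : Fin n) (j : Fin m), P i j ≠ 0 → ∃ a, i ∈ X a ∧ j ∈ Y a)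
    (hsub : ∀ a, prank (P.submatrix (fun i : (X a : Finset (Fin n)) => (i : Fin n))
      (fun j : (Y a : Finset (Fin m)) => (j : Fin m))) ≤ k) :
    kprank k P ≤ t :=
  Nat.sInf_le <| HasBlockPsdFac.of_rectangles P X Y hdisj hcover fun a =>
    HasPsdFac.of_prank_le (fun _ _ => hP _ _) (hsub a)

theorem stmt4 {n m k t : ℕ} (hk : 1 ≤ k)
    (P : Matrix (Fin n) (Fin m) ℝ) (hP : ∀ i j, 0 ≤ P i j)
    (hPsum : ∑ i, ∑ j, P i j = 1)
    (X : Fin t → Finset (Fin n)) (Y : Fin t → Finset (Fin m))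
    (hdisj : ∀ a b, a ≠ b →
      ∀ (i : Fin n) (j : Fin m), i ∈ X a → j ∈ Y a → ¬ (i ∈ X b ∧ j ∈ Y b))
    (hcover : ∀ (i : Fin n) (j : Fin m), P i j ≠ 0 → ∃ a, i ∈ X a ∧ j ∈ Y a)
    (hsub : ∀ a, prank (P.submatrix (fun i : (X a : Finset (Fin n)) => (i : Fin n))
      (fun j : (Y a : Finset (Fin m)) => (j : Fin m))) ≤ k) :
    kprank k P ≤ t :=
  stmt4_general P hP X Y hdisj hcover hsub
end

section
/- Let n ≥ 64 and let Q ∈ ℝ_{≥0}^{n×n} be a nonnegative matrix with Q(i,i) = 0 for all i, Q(i,j) > 0 for all i ≠ j, and nonnegative rank rank₊(Q) ≥ 2√n − 2. If Q⊗Q = Σ_{k=1}^{r} P_k, where each P_k ∈ ℝ_{≥0}^{n²×n²} is a nonnegative matrix with PSD-rank prank(P_k) ≤ 3, then r ≥ log₂ n. -/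
open Matrix BigOperators Kronecker
open scoped ComplexOrder

/-!
The zero diagonal of `Q` forces every part `Pₖ` to vanish on the diagonal blocks
`(i, ·) × (i, ·)`. For PSD matrices `tr (C D) = 0` implies `C D = 0`, so in a factorization
`Pₖ = tr (C D)` of size at most `3` we get `(∑ₐ C (i, a)) (∑_b D (i, b)) = 0`; the two ranks add
up to at most `3`, so one sum has rank at most `1`, and then every matrix of that family is a
nonnegative multiple of one `w wᴴ`. Recording for each `i` and `k` which side degenerates colours
`[n]` with `2 ^ r` colours. If `n > 2 ^ r`, two rows `i ≠ j` share a colour, and then every block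
`(Pₖ)_{(i, ·), (j, ·)}` is a nonnegative rank-one matrix. These blocks add up to `Q i j • Q`, so
`rank₊ Q ≤ r`, while `log₂ n ≤ 2 √n - 2 ≤ rank₊ Q`.
-/

namespace Matrix.PosSemidef

variable {n : Type*} [Fintype n]

open scoped MatrixOrder in
theorem mul_eq_zero_of_trace_mul_eq_zero {A B : Matrix n n ℂ} (hA : A.PosSemidef)
    (hB : B.PosSemidef) (h : (A * B).trace = 0) : A * B = 0 := by
  classical
  obtain ⟨X, rfl⟩ := CStarAlgebra.nonneg_iff_eq_star_mul_self.mp hA.nonneg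
  obtain ⟨Y, rfl⟩ := CStarAlgebra.nonneg_iff_eq_star_mul_self.mp hB.nonneg
  simp only [star_eq_conjTranspose] at h ⊢
  have hXY : X * Yᴴ = 0 := by
    rw [← trace_conjTranspose_mul_self_eq_zero_iff, ← h, conjTranspose_mul,
      conjTranspose_conjTranspose, Matrix.mul_assoc, trace_mul_comm, Matrix.mul_assoc,
      Matrix.mul_assoc, Matrix.mul_assoc]
  rw [Matrix.mul_assoc, ← Matrix.mul_assoc X, hXY, Matrix.zero_mul, Matrix.mul_zero]

theorem mulVec_eq_zero_of_sum_mulVec_eq_zero {ι : Type*} [Fintype ι] {C : ι → Matrix n n ℂ}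
    (hC : ∀ a, (C a).PosSemidef) {x : n → ℂ} (hx : (∑ a, C a) *ᵥ x = 0) (a : ι) :
    C a *ᵥ x = 0 := by
  rw [← (hC a).dotProduct_mulVec_zero_iff]
  have hsum : ∑ b, star x ⬝ᵥ C b *ᵥ x = 0 := by
    simp_rw [← dotProduct_sum, ← sum_mulVec, hx, dotProduct_zero]
  exact (Finset.sum_eq_zero_iff_of_nonneg fun b _ => (hC b).dotProduct_mulVec_nonneg x).mp
    hsum a (Finset.mem_univ a)

theorem exists_mulVec_eq_zero_of_rank_le_one {F : Matrix n n ℂ} (hF : F.PosSemidef)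
    (hr : F.rank ≤ 1) : ∃ w : n → ℂ, ∀ x, star w ⬝ᵥ x = 0 → F *ᵥ x = 0 := by
  obtain ⟨w, hw⟩ := (Submodule.finrank_le_one_iff_isPrincipal _).mp hr
  refine ⟨w, fun x hx => ?_⟩
  obtain ⟨c, hc⟩ := Submodule.mem_span_singleton.mp
    (hw.symm ▸ LinearMap.mem_range_self F.mulVecLin x :)
  rw [← hF.dotProduct_mulVec_zero_iff, ← mulVecLin_apply, ← hc, dotProduct_smul,
    star_dotProduct, hx, star_zero, smul_zero]

theorem exists_eq_smul_vecMulVec {C : Matrix n n ℂ} (hC : C.PosSemidef) {w : n → ℂ}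
    (hw : ∀ x, star w ⬝ᵥ x = 0 → C *ᵥ x = 0) :
    ∃ c : ℂ, 0 ≤ c ∧ C = c • vecMulVec w (star w) := by
  classical
  by_cases hw0 : w = 0
  · refine ⟨0, le_rfl, ?_⟩
    rw [zero_smul]
    exact toLin'.injective (LinearMap.ext fun x => by simpa using hw x (by simp [hw0]))
  set N := star w ⬝ᵥ w
  have hN : N ≠ 0 := fun h => hw0 (dotProduct_star_self_eq_zero.mp h)
  -- `E` is the orthogonal projection onto `ℂ ∙ w`, and `C` vanishes on its kernel: `C = E C E`.
  set E := N⁻¹ • vecMulVec w (star w)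
  have hE : Eᴴ = E := by
    rw [conjTranspose_smul, conjTranspose_vecMulVec, star_star, star_inv₀]
    congr 2
    exact (star_dotProduct w w).symm
  have hCE : C * E = C := toLin'.injective <| LinearMap.ext fun x => by
    have : star w ⬝ᵥ (x - E *ᵥ x) = 0 := by
      simp only [E, smul_mulVec, vecMulVec_mulVec, dotProduct_sub, dotProduct_smul,
        op_smul_eq_smul, smul_eq_mul]
      rw [mul_left_comm, inv_mul_cancel₀ hN, mul_one, sub_self]
    rw [toLin'_apply, toLin'_apply, ← mulVec_mulVec, eq_comm, ← sub_eq_zero, ← mulVec_sub]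
    exact hw _ this
  have hEC : E * C = C := by
    simpa [conjTranspose_mul, hE, hC.isHermitian.eq] using congrArg (·ᴴ) hCE
  refine ⟨N⁻¹ * N⁻¹ * (star w ⬝ᵥ C *ᵥ w), ?_, ?_⟩
  · have hN0 : 0 ≤ N⁻¹ := inv_nonneg_of_nonneg (dotProduct_star_self_nonneg w)
    exact mul_nonneg (mul_nonneg hN0 hN0) (hC.dotProduct_mulVec_nonneg w)
  · calc C = E * C * E := by rw [hEC, hCE]
      _ = _ := by
        simp only [E, smul_mul, Matrix.mul_smul, vecMulVec_mul, smul_smul]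
        rw [vecMul_vecMulVec, vecMulVec_smul, smul_smul, dotProduct_mulVec]

end Matrix.PosSemidef

section RankOneRay

variable {ι κ n : Type*} [Fintype n]

def OnRankOneRay (C : ι → Matrix n n ℂ) : Prop :=
  ∃ w : n → ℂ, ∀ a, ∃ c : ℂ, 0 ≤ c ∧ C a = c • vecMulVec w (star w)

theorem onRankOneRay_of_rank_sum_le_one [Fintype ι] {C : ι → Matrix n n ℂ}
    (hC : ∀ a, (C a).PosSemidef) (hr : (∑ a, C a).rank ≤ 1) : OnRankOneRay C := by
  obtain ⟨w, hw⟩ := (posSemidef_sum _ fun a _ => hC a).exists_mulVec_eq_zero_of_rank_le_one hr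
  exact ⟨w, fun a => (hC a).exists_eq_smul_vecMulVec fun x hx =>
    PosSemidef.mulVec_eq_zero_of_sum_mulVec_eq_zero hC (hw x hx) a⟩

theorem onRankOneRay_or_of_trace_mul_eq_zero [Fintype ι] [Fintype κ]
    (hn : Fintype.card n ≤ 3) {C : ι → Matrix n n ℂ} {D : κ → Matrix n n ℂ}
    (hC : ∀ a, (C a).PosSemidef) (hD : ∀ b, (D b).PosSemidef)
    (h : ∀ a b, (C a * D b).trace = 0) : OnRankOneRay C ∨ OnRankOneRay D := by
  have hCD : (∑ a, C a) * (∑ b, D b) = 0 := by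
    rw [Finset.sum_mul_sum]
    exact Finset.sum_eq_zero fun a _ => Finset.sum_eq_zero fun b _ =>
      (hC a).mul_eq_zero_of_trace_mul_eq_zero (hD b) (h a b)
  have hrank := rank_add_rank_le_card_of_mul_eq_zero hCD
  rcases le_or_gt (∑ a, C a).rank 1 with hle | hgt
  · exact .inl (onRankOneRay_of_rank_sum_le_one hC hle)
  · exact .inr (onRankOneRay_of_rank_sum_le_one hD (by omega))

theorem OnRankOneRay.exists_trace_mul_eq_mul {C : ι → Matrix n n ℂ} (hC : OnRankOneRay C)
    {D : κ → Matrix n n ℂ} (hD : ∀ b, (D b).PosSemidef) :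
    ∃ f : ι → ℂ, ∃ g : κ → ℂ, 0 ≤ f ∧ 0 ≤ g ∧ ∀ a b, (C a * D b).trace = f a * g b := by
  obtain ⟨w, hw⟩ := hC
  choose c hc hCc using hw
  refine ⟨c, fun b => star w ⬝ᵥ D b *ᵥ w, hc, fun b => (hD b).dotProduct_mulVec_nonneg w,
    fun a b => ?_⟩
  rw [hCc, smul_mul, trace_smul, vecMulVec_mul, trace_vecMulVec, dotProduct_comm,
    ← dotProduct_mulVec, smul_eq_mul]

end RankOneRay

section NonnegRank

variable {α β : Type}

def IsNonnegRankLeOne (M : Matrix α β ℝ) : Prop :=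
  ∃ f : α → ℝ, ∃ g : β → ℝ, 0 ≤ f ∧ 0 ≤ g ∧ M = vecMulVec f g

theorem isNonnegRankLeOne_of_ofReal_eq_mul {M : Matrix α β ℝ} {f : α → ℂ} {g : β → ℂ}
    (hf : 0 ≤ f) (hg : 0 ≤ g) (h : ∀ a b, (M a b : ℂ) = f a * g b) : IsNonnegRankLeOne M := by
  refine ⟨fun a => (f a).re, fun b => (g b).re, fun a => (Complex.nonneg_iff.mp (hf a)).1,
    fun b => (Complex.nonneg_iff.mp (hg b)).1, ?_⟩
  ext a b
  have hfa := Complex.eq_re_of_ofReal_le (r := 0) (by simpa using hf a)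
  have hgb := Complex.eq_re_of_ofReal_le (r := 0) (by simpa using hg b)
  have hab := h a b
  rw [hfa, hgb] at hab
  exact_mod_cast hab

theorem nnRank_le_of_smul_eq_sum [Fintype α] [Fintype β] {r : ℕ} {Q : Matrix α β ℝ} {c : ℝ}
    (hc : 0 < c) {M : Fin r → Matrix α β ℝ} (hM : ∀ k, IsNonnegRankLeOne (M k))
    (h : c • Q = ∑ k, M k) : nnRank Q ≤ r := by
  choose f g hf hg hfg using hM
  refine Nat.sInf_le ⟨fun k => c⁻¹ • f k, g, fun k a => ?_, fun k b => hg k b, fun a b => ?_⟩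
  · exact mul_nonneg (inv_nonneg.mpr hc.le) (hf k a)
  · have := congr_fun₂ h a b
    simp only [Matrix.smul_apply, Matrix.sum_apply, hfg, vecMulVec_apply, smul_eq_mul] at this
    simp only [Pi.smul_apply, smul_eq_mul, mul_assoc, ← Finset.mul_sum, ← this]
    field_simp

end NonnegRank

section PsdFactorization

variable {α β : Type} [Fintype α] [Fintype β]

theorem hasPsdFac_card_of_nonneg {P : Matrix α β ℝ} (hP : ∀ i j, 0 ≤ P i j) :
    HasPsdFac P (Fintype.card α) := by
  classical
  let e := Fintype.equivFin α
  refine ⟨fun i => diagonal (Pi.single (e i) 1), fun j => diagonal fun p => (P (e.symm p) j : ℂ),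
    fun i => ?_, fun j => ?_, fun i j => ?_⟩
  · exact PosSemidef.diagonal fun p => by
      rcases eq_or_ne p (e i) with rfl | hp <;> simp [*]
  · exact PosSemidef.diagonal fun p => Complex.zero_le_real.mpr (hP _ _)
  · rw [diagonal_mul_diagonal, trace_diagonal, Finset.sum_eq_single (e i)] <;> simp_all

theorem hasPsdFac_prank_of_nonneg {P : Matrix α β ℝ} (hP : ∀ i j, 0 ≤ P i j) :
    HasPsdFac P (prank P) :=
  Nat.sInf_mem (s := {r | HasPsdFac P r}) ⟨_, hasPsdFac_card_of_nonneg hP⟩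

theorem HasPsdFac.exists_isNonnegRankLeOne_submatrix {γ : Type} [Fintype γ]
    {P : Matrix (α × β) (α × γ) ℝ} {m : ℕ} (hP : HasPsdFac P m) (hm : m ≤ 3) (hzero : ∀ i a b, P (i, a) (i, b) = 0) :
    ∃ s : α → Prop, ∀ i j, (s i ↔ s j) → IsNonnegRankLeOne (P.submatrix (i, ·) (j, ·)) := by
  obtain ⟨C, D, hC, hD, hCD⟩ := hP
  have hside : ∀ i, OnRankOneRay (fun a => C (i, a)) ∨ OnRankOneRay (fun b => D (i, b)) :=
    fun i => onRankOneRay_or_of_trace_mul_eq_zero (by simpa using hm) (fun a => hC _)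
      (fun b => hD _) fun a b => by rw [← hCD, hzero, Complex.ofReal_zero]
  refine ⟨fun i => OnRankOneRay (fun a => C (i, a)), fun i j hij => ?_⟩
  by_cases hi : OnRankOneRay (fun a => C (i, a))
  · obtain ⟨f, g, hf, hg, hfg⟩ := hi.exists_trace_mul_eq_mul fun b => hD (j, b)
    exact isNonnegRankLeOne_of_ofReal_eq_mul hf hg fun a b => (hCD _ _).trans (hfg a b)
  · obtain ⟨g, f, hg, hf, hgf⟩ :=
      ((hside j).resolve_left (mt hij.mpr hi)).exists_trace_mul_eq_mul fun a => hC (i, a)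
    exact isNonnegRankLeOne_of_ofReal_eq_mul hf hg fun a b => by
      rw [submatrix_apply, hCD, trace_mul_comm, hgf, mul_comm]

end PsdFactorization

theorem nnRank_le_of_kronecker_self_eq_sum {n r : ℕ} {Q : Matrix (Fin n) (Fin n) ℝ}
    (hdiag : ∀ i, Q i i = 0) (hoff : ∀ i j, i ≠ j → 0 < Q i j)
    {P : Fin r → Matrix (Fin n × Fin n) (Fin n × Fin n) ℝ} (hPnn : ∀ k x y, 0 ≤ P k x y)
    (hPrank : ∀ k, prank (P k) ≤ 3) (hsum : Q ⊗ₖ Q = ∑ k, P k) (hr : 2 ^ r < n) :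
    nnRank Q ≤ r := by
  have hzero : ∀ k i a b, P k (i, a) (i, b) = 0 := fun k i a b => by
    have h := congr_fun₂ hsum (i, a) (i, b)
    rw [kronecker_apply, hdiag, zero_mul, Matrix.sum_apply, eq_comm] at h
    exact (Finset.sum_eq_zero_iff_of_nonneg fun k _ => hPnn k _ _).mp h k (Finset.mem_univ k)
  choose s hs using fun k =>
    (hasPsdFac_prank_of_nonneg (hPnn k)).exists_isNonnegRankLeOne_submatrix (hPrank k) (hzero k)
  obtain ⟨i, j, hij, hsij⟩ := Fintype.exists_ne_map_eq_of_card_lt (fun i => {k | s k i})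
    (by simpa [Fintype.card_set] using hr)
  refine nnRank_le_of_smul_eq_sum (hoff i j hij) (fun k => hs k i j (Set.ext_iff.mp hsij k)) ?_
  ext a b
  simpa [kronecker_apply, Matrix.sum_apply] using congr_fun₂ hsum (i, a) (j, b)

theorem Real.logb_two_le_two_mul_sqrt_sub_two {x : ℝ} (hx : 16 ≤ x) :
    Real.logb 2 x ≤ 2 * √x - 2 := by
  set a := √(√x)
  have hsqrt : √x = a ^ 2 := (Real.sq_sqrt (Real.sqrt_nonneg x)).symm
  have hx_eq : x = a ^ 4 := by
    rw [show a ^ 4 = (a ^ 2) ^ 2 by ring, ← hsqrt, Real.sq_sqrt (by linarith)]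
  have h4 : 4 ≤ √x := Real.le_sqrt_of_sq_le (by linarith)
  have ha : 2 ≤ a := Real.le_sqrt_of_sq_le (by linarith)
  have hlog : Real.log x ≤ 4 * (a - 1) := by
    rw [hx_eq, Real.log_pow]
    push_cast
    linarith [Real.log_le_sub_one_of_pos (by linarith : 0 < a)]
  rw [Real.logb, div_le_iff₀ (Real.log_pos one_lt_two), hsqrt]
  nlinarith [mul_nonneg (by linarith : 0 ≤ a - 1)
    (by nlinarith [Real.log_two_gt_d9] : 0 ≤ (a + 1) * Real.log 2 - 2)]

theorem stmt7 {n : ℕ} (hn : 64 ≤ n)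
    (Q : Matrix (Fin n) (Fin n) ℝ)
    (hdiag : ∀ i, Q i i = 0) (hoff : ∀ i j, i ≠ j → 0 < Q i j)
    (hnnr : 2 * Real.sqrt n - 2 ≤ (nnRank Q : ℝ))
    (r : ℕ) (P : Fin r → Matrix (Fin n × Fin n) (Fin n × Fin n) ℝ)
    (hPnn : ∀ k x y, 0 ≤ P k x y) (hPrank : ∀ k, prank (P k) ≤ 3)
    (hsum : Q ⊗ₖ Q = ∑ k, P k) :
    Real.logb 2 n ≤ (r : ℝ) := by
  rcases le_or_gt n (2 ^ r) with hle | hlt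
  · rw [Real.logb_le_iff_le_rpow one_lt_two (by positivity), Real.rpow_natCast]
    exact_mod_cast hle
  · have hrank : (nnRank Q : ℝ) ≤ r :=
      mod_cast nnRank_le_of_kronecker_self_eq_sum hdiag hoff hPnn hPrank hsum hlt
    have hlog := Real.logb_two_le_two_mul_sqrt_sub_two (x := n) (by exact_mod_cast (by omega))
    linarith
end

section
/- Let P ∈ ℝ_{≥0}^{n×m} be a nonnegative matrix, let c = ⌈log₂ prank(P)⌉, and suppose P = Σ_{i=1}^{2^c} P_i, where each P_i ∈ ℝ_{≥0}^{n×m} is nonnegative with PSD-rank prank(P_i) ≤ 2^t for a nonnegative integer t. Then t ≥ (⌈log₂ rank(P)⌉ − ⌈log₂ prank(P)⌉) / 2. -/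
open Matrix BigOperators Kronecker
open scoped ComplexOrder

/-!
A PSD factorization `P i j = tr (C i * D j)` of size `r` is, after identifying an `r × r`
Hermitian matrix with a real vector of length `r²`, a real factorization of `P` through
`ℝ^{r²}`; hence `rank P ≤ prank P ²`. Rank being subadditive, `P = ∑ Q i` with `2 ^ c` terms
of PSD-rank at most `2 ^ t` gives `rank P ≤ 2 ^ (c + 2 t)`, and taking `⌈log₂⌉` finishes.
-/

namespace Matrix

variable {K : Type*} [Field K] {m n : Type*} [Fintype n]

theorem rank_add_le (A B : Matrix m n K) : (A + B).rank ≤ A.rank + B.rank := by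
  rw [rank, rank, rank, mulVecLin_add]
  have hrange : LinearMap.range (A.mulVecLin + B.mulVecLin)
      ≤ LinearMap.range A.mulVecLin ⊔ LinearMap.range B.mulVecLin := by
    rintro _ ⟨v, rfl⟩
    exact Submodule.mem_sup.2 ⟨A.mulVecLin v, ⟨v, rfl⟩, B.mulVecLin v, ⟨v, rfl⟩, rfl⟩
  exact (Submodule.finrank_mono hrange).trans
    (Submodule.finrank_add_le_finrank_add_finrank _ _)

theorem rank_sum_le {ι : Type*} (s : Finset ι) (A : ι → Matrix m n K) :
    (∑ i ∈ s, A i).rank ≤ ∑ i ∈ s, (A i).rank :=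
  Finset.sum_hom_rel (r := fun A k => rank A ≤ k) (rank_zero (m := m)).le
    fun _ _ _ h => (rank_add_le _ _).trans (by gcongr)

/-- Real coordinates in which the real trace pairing of Hermitian matrices becomes the dot
product. -/
def realCoords {ι : Type*} (C : Matrix ι ι ℂ) : ι × ι → ℝ :=
  fun p => (C p.1 p.2).re + (C p.1 p.2).im

theorem re_trace_mul_eq_dotProduct {ι : Type*} [Fintype ι] {C D : Matrix ι ι ℂ}
    (hC : C.IsHermitian) (hD : D.IsHermitian) :
    (C * D).trace.re = C.realCoords ⬝ᵥ D.realCoords := by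
  set g : ι → ι → ℝ := fun a b => (C a b).re * (D a b).im + (C a b).im * (D a b).re
  -- `g` is antisymmetric since real parts of Hermitian matrices are symmetric and
  -- imaginary parts antisymmetric, so the cross terms of the dot product cancel.
  have hg_swap : ∀ a b, g b a = -g a b := by
    intro a b
    simp only [g]
    rw [← hC.apply a b, ← hD.apply a b]
    simp only [RCLike.star_def, Complex.conj_re, Complex.conj_im]
    ring
  have hcross : ∑ a, ∑ b, g a b = 0 := by
    have h : ∑ a, ∑ b, g a b = -∑ a, ∑ b, g a b :=
      calc ∑ a, ∑ b, g a b = ∑ b, ∑ a, g a b := Finset.sum_comm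
        _ = ∑ b, ∑ a, -g b a :=
          Finset.sum_congr rfl fun b _ => Finset.sum_congr rfl fun a _ => hg_swap b a
        _ = -∑ a, ∑ b, g a b := by simp only [Finset.sum_neg_distrib]
    linarith
  have htrace : (C * D).trace.re =
      ∑ a, ∑ b, ((C a b).re * (D a b).re + (C a b).im * (D a b).im) := by
    simp only [trace, diag_apply, mul_apply, Complex.re_sum]
    refine Finset.sum_congr rfl fun a _ => Finset.sum_congr rfl fun b _ => ?_
    rw [← hD.apply a b]
    simp only [RCLike.star_def, Complex.mul_re, Complex.conj_re, Complex.conj_im]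
    ring
  have hdot : C.realCoords ⬝ᵥ D.realCoords =
      ∑ a, ∑ b, ((C a b).re * (D a b).re + (C a b).im * (D a b).im) + ∑ a, ∑ b, g a b := by
    rw [dotProduct, ← Finset.univ_product_univ, Finset.sum_product, ← Finset.sum_add_distrib]
    refine Finset.sum_congr rfl fun a _ => ?_
    rw [← Finset.sum_add_distrib]
    exact Finset.sum_congr rfl fun b _ => by simp only [realCoords, g]; ring
  rw [htrace, hdot, hcross, add_zero]

end Matrix

theorem hasPsdFac_of_nonneg {α : Type} [Fintype α] {m : ℕ} (P : Matrix α (Fin m) ℝ)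
    (hP : ∀ i j, 0 ≤ P i j) : HasPsdFac P m := by
  refine ⟨fun i => diagonal fun a => (P i a : ℂ), fun j => diagonal (Pi.single j 1),
    fun i => posSemidef_diagonal_iff.2 fun a => ?_,
    fun j => posSemidef_diagonal_iff.2 (Pi.single_nonneg.2 zero_le_one), fun i j => ?_⟩
  · exact_mod_cast hP i a
  · simp [diagonal_mul_diagonal, trace_diagonal, Pi.single_apply]

theorem hasPsdFac_prank {α : Type} [Fintype α] {m : ℕ} (P : Matrix α (Fin m) ℝ)
    (hP : ∀ i j, 0 ≤ P i j) : HasPsdFac P (prank P) :=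
  Nat.sInf_mem (s := {r | HasPsdFac P r}) ⟨m, hasPsdFac_of_nonneg P hP⟩

theorem HasPsdFac.rank_le {α β : Type} [Fintype α] [Fintype β] {P : Matrix α β ℝ} {r : ℕ}
    (h : HasPsdFac P r) : P.rank ≤ r ^ 2 := by
  obtain ⟨C, D, hC, hD, hfac⟩ := h
  have hP : P = (of fun i => (C i).realCoords) * (of fun j => (D j).realCoords)ᵀ := by
    ext i j
    change P i j = (C i).realCoords ⬝ᵥ (D j).realCoords
    rw [← re_trace_mul_eq_dotProduct (hC i).isHermitian (hD j).isHermitian,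
      ← hfac i j, Complex.ofReal_re]
  rw [hP]
  calc _ ≤ _ := rank_mul_le_left _ _
    _ ≤ Fintype.card (Fin r × Fin r) := rank_le_card_width _
    _ = r ^ 2 := by simp [sq]

theorem rank_le_prank_sq {α : Type} [Fintype α] {m : ℕ} (P : Matrix α (Fin m) ℝ)
    (hP : ∀ i j, 0 ≤ P i j) : P.rank ≤ prank P ^ 2 :=
  (hasPsdFac_prank P hP).rank_le

theorem stmt10_general {n m : ℕ}
    (P : Matrix (Fin n) (Fin m) ℝ)
    (c : ℕ) (hc : c = Nat.clog 2 (prank P)) (t : ℕ)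
    (Q : Fin (2 ^ c) → Matrix (Fin n) (Fin m) ℝ)
    (hQnn : ∀ i x y, 0 ≤ Q i x y) (hQrank : ∀ i, prank (Q i) ≤ 2 ^ t)
    (hsum : P = ∑ i, Q i) :
    ((Nat.clog 2 P.rank : ℝ) - (Nat.clog 2 (prank P) : ℝ)) / 2 ≤ (t : ℝ) := by
  have hrank : P.rank ≤ 2 ^ (c + 2 * t) :=
    calc P.rank ≤ ∑ i, (Q i).rank := hsum ▸ rank_sum_le _ Q
      _ ≤ ∑ _i : Fin (2 ^ c), (2 ^ t) ^ 2 := Finset.sum_le_sum fun i _ =>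
          (rank_le_prank_sq (Q i) (hQnn i)).trans (Nat.pow_le_pow_left (hQrank i) 2)
      _ = 2 ^ (c + 2 * t) := by simp [pow_add, pow_mul']
  have hclog : Nat.clog 2 P.rank ≤ c + 2 * t :=
    (Nat.clog_mono_right 2 hrank).trans (Nat.clog_pow 2 _ one_lt_two).le
  rw [← hc]
  have : (Nat.clog 2 P.rank : ℝ) ≤ c + 2 * t := by exact_mod_cast hclog
  linarith

theorem stmt10 {n m : ℕ}
    (P : Matrix (Fin n) (Fin m) ℝ) (hP : ∀ i j, 0 ≤ P i j)
    (c : ℕ) (hc : c = Nat.clog 2 (prank P)) (t : ℕ)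
    (Q : Fin (2 ^ c) → Matrix (Fin n) (Fin m) ℝ)
    (hQnn : ∀ i x y, 0 ≤ Q i x y) (hQrank : ∀ i, prank (Q i) ≤ 2 ^ t)
    (hsum : P = ∑ i, Q i) :
    ((Nat.clog 2 P.rank : ℝ) - (Nat.clog 2 (prank P) : ℝ)) / 2 ≤ (t : ℝ) :=
  stmt10_general P c hc t Q hQnn hQrank hsum
end

section
/- Let n ≥ 64 and let Q ∈ ℝ_{≥0}^{n×n} be a nonnegative matrix with Q(i,i) = 0 for all i, Q(i,j) > 0 for all i ≠ j, and nonnegative rank rank₊(Q) ≥ 2√n − 2. Suppose Q⊗Q = Σ_{k=1}^{r} P_k with each P_k ∈ ℝ_{≥0}^{n²×n²} nonnegative of PSD-rank prank(P_k) ≤ 2, and suppose r < log₂ n. Then for every pair (i,j) with i ≠ j there exists k₀ ∈ [r] such that the (i,j)-th n×n block of P_{k₀} (the submatrix of P_{k₀} in the position of the block Q(i,j)·Q of Q⊗Q) has ordinary rank at least 3. -/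
open Matrix BigOperators Kronecker
open scoped ComplexOrder

/-! If every `(i, j)` block of every `P k` had rank at most two, each block, being nonnegative,
would have nonnegative rank at most two: its columns normalized to sum one lie in a plane and on
the affine hyperplane `∑ x = 1`, hence on a line, hence in the segment between the two extreme
normalized columns. As the `(i, j)` block of `Q ⊗ₖ Q` is `Q i j • Q` with `Q i j > 0`, this gives
`rank₊ Q ≤ 2 r < 2 log₂ n ≤ 2 √n - 2`, contradicting the lower bound on `rank₊ Q`. -/

open Finset Module

lemma exists_forall_mem_segment_of_eq_add_smul {J E : Type*} [AddCommGroup E] [Module ℝ E]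
    {S : Finset J} (hS : S.Nonempty) (w : J → E) (p d : E) (t : J → ℝ)
    (hw : ∀ j ∈ S, w j = p + t j • d) :
    ∃ jm ∈ S, ∃ jM ∈ S, ∀ j ∈ S, w j ∈ segment ℝ (w jm) (w jM) := by
  obtain ⟨jm, hjm, hmin⟩ := S.exists_min_image t hS
  obtain ⟨jM, hjM, hmax⟩ := S.exists_max_image t hS
  let f : ℝ →ᵃ[ℝ] E := AffineMap.lineMap p (p + d)
  have hf : ∀ j ∈ S, w j = f (t j) := fun j hj => by
    simp [f, AffineMap.lineMap_apply, hw j hj, add_comm]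
  refine ⟨jm, hjm, jM, hjM, fun j hj => ?_⟩
  rw [hf j hj, hf jm hjm, hf jM hjM, ← image_segment, segment_eq_Icc (hmin jM hjM)]
  exact Set.mem_image_of_mem f ⟨hmin j hj, hmax j hj⟩

lemma exists_eq_add_smul_of_finrank_le_two {K E J : Type*} [Field K] [AddCommGroup E]
    [Module K E] [FiniteDimensional K E] {V : Submodule K E} (hV : finrank K V ≤ 2)
    (φ : E →ₗ[K] K) {S : Finset J} (w : J → E) (hwV : ∀ j ∈ S, w j ∈ V)
    (hφ : ∀ j ∈ S, φ (w j) = 1) {j₀ : J} (hj₀ : j₀ ∈ S) :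
    ∃ (d : E) (t : J → K), ∀ j ∈ S, w j = w j₀ + t j • d := by
  set L := V ⊓ LinearMap.ker φ
  have hLV : L < V := SetLike.lt_iff_le_and_exists.mpr
    ⟨inf_le_left, w j₀, hwV j₀ hj₀, fun h => by simpa [hφ j₀ hj₀] using h.2⟩
  have hL : finrank K L ≤ 1 := by
    have := Submodule.finrank_lt_finrank_of_lt hLV
    omega
  obtain ⟨d, hd⟩ := finrank_le_one_iff.mp hL
  have hcoord : ∀ j, ∃ c : K, j ∈ S → w j = w j₀ + c • (d : E) := by
    intro j
    by_cases hj : j ∈ S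
    · obtain ⟨c, hc⟩ := hd ⟨w j - w j₀, V.sub_mem (hwV j hj) (hwV j₀ hj₀),
        by simp [hφ j hj, hφ j₀ hj₀]⟩
      refine ⟨c, fun _ => ?_⟩
      rw [← Submodule.coe_smul, hc]
      exact (add_sub_cancel _ _).symm
    · exact ⟨0, fun h => absurd h hj⟩
  choose t ht using hcoord
  exact ⟨d, t, ht⟩

theorem Matrix.exists_nonneg_factorization_of_rank_le_two {α β : Type*} [Fintype α]
    [Fintype β] (M : Matrix α β ℝ) (hM : ∀ x y, 0 ≤ M x y) (hrank : M.rank ≤ 2) :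
    ∃ (a : Fin 2 → α → ℝ) (b : Fin 2 → β → ℝ), (∀ l x, 0 ≤ a l x) ∧ (∀ l y, 0 ≤ b l y) ∧
      ∀ x y, M x y = ∑ l, a l x * b l y := by
  classical
  set s : β → ℝ := fun y => ∑ x, M x y
  set S := univ.filter fun y => s y ≠ 0
  set w : β → α → ℝ := fun y => (s y)⁻¹ • M.col y
  have hs : ∀ y, 0 ≤ s y := fun y => sum_nonneg fun x _ => hM x y
  have hw : ∀ y x, 0 ≤ w y x := fun y x => mul_nonneg (inv_nonneg.mpr (hs y)) (hM x y)
  have hcol_zero : ∀ y ∉ S, M.col y = 0 := fun y hy => funext fun x => by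
    simp only [S, mem_filter, mem_univ, true_and, not_not] at hy
    exact (sum_eq_zero_iff_of_nonneg fun x _ => hM x y).mp hy x (mem_univ x)
  rcases S.eq_empty_or_nonempty with hS | ⟨j₀, hj₀⟩
  · refine ⟨0, 0, fun _ _ => le_rfl, fun _ _ => le_rfl, fun x y => ?_⟩
    simpa using congrFun (hcol_zero y (by simp [hS])) x
  have hsum : ∀ y ∈ S, ∑ x, w y x = 1 := fun y hy => by
    simp only [w, Pi.smul_apply, smul_eq_mul, ← mul_sum]
    exact inv_mul_cancel₀ (mem_filter.mp hy).2
  have hwV : ∀ y ∈ S, w y ∈ LinearMap.range M.mulVecLin := fun y _ => by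
    rw [range_mulVecLin]
    exact Submodule.smul_mem _ _ (Submodule.subset_span ⟨y, rfl⟩)
  obtain ⟨d, t, hline⟩ := exists_eq_add_smul_of_finrank_le_two hrank (∑ x, LinearMap.proj x) w
    hwV (by simpa using hsum) hj₀
  obtain ⟨jm, hjm, jM, hjM, hseg⟩ :=
    exists_forall_mem_segment_of_eq_add_smul ⟨j₀, hj₀⟩ w _ d t hline
  have hcone : ∀ y, ∃ c₁ c₂ : ℝ, 0 ≤ c₁ ∧ 0 ≤ c₂ ∧ M.col y = c₁ • w jm + c₂ • w jM := by
    intro y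
    by_cases hy : y ∈ S
    · obtain ⟨c₁, c₂, hc₁, hc₂, -, hc⟩ := hseg y hy
      refine ⟨s y * c₁, s y * c₂, mul_nonneg (hs y) hc₁, mul_nonneg (hs y) hc₂, ?_⟩
      rw [mul_smul, mul_smul, ← smul_add, hc, smul_smul, mul_inv_cancel₀ (mem_filter.mp hy).2,
        one_smul]
    · exact ⟨0, 0, le_rfl, le_rfl, by simp [hcol_zero y hy]⟩
  choose c₁ c₂ hc₁ hc₂ hc using hcone
  refine ⟨![w jm, w jM], ![c₁, c₂], fun l x => ?_, fun l y => ?_, fun x y => ?_⟩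
  · fin_cases l <;> exact hw _ x
  · fin_cases l
    exacts [hc₁ y, hc₂ y]
  · simpa [Fin.sum_univ_two, mul_comm] using congrFun (hc y) x

lemma nnRank_le_card {α β ι : Type} [Fintype α] [Fintype β] [Fintype ι] {P : Matrix α β ℝ}
    (u : ι → α → ℝ) (v : ι → β → ℝ) (hu : ∀ l x, 0 ≤ u l x) (hv : ∀ l y, 0 ≤ v l y)
    (hP : ∀ x y, P x y = ∑ l, u l x * v l y) : nnRank P ≤ Fintype.card ι := by
  let e := Fintype.equivFin ι
  refine Nat.sInf_le ⟨fun l => u (e.symm l), fun l => v (e.symm l), fun l => hu _,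
    fun l => hv _, fun x y => ?_⟩
  rw [hP, ← e.symm.sum_comp]

lemma logb_two_le_sqrt_sub_one {n : ℕ} (hn : 64 ≤ n) : Real.logb 2 n ≤ Real.sqrt n - 1 := by
  set t := Real.sqrt n
  have ht : 8 ≤ t := Real.le_sqrt_of_sq_le (by norm_num; exact_mod_cast hn)
  have hlog_n : Real.log n = 2 * Real.log t := by
    rw [Real.log_sqrt n.cast_nonneg]
    ring
  have hlog_t : Real.log t ≤ t / 8 - 1 + 3 * Real.log 2 := by
    have h8 : Real.log 8 = 3 * Real.log 2 := by
      rw [show (8 : ℝ) = 2 ^ 3 by norm_num, Real.log_pow]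
      norm_num
    have := Real.log_le_sub_one_of_pos (show 0 < t / 8 by linarith)
    rw [Real.log_div (by linarith) (by norm_num), h8] at this
    linarith
  have hlog2 := Real.log_two_gt_d9
  rw [Real.logb, hlog_n, div_le_iff₀ (by linarith)]
  nlinarith

theorem stmt15_general {n : ℕ} (hn : 64 ≤ n)
    (Q : Matrix (Fin n) (Fin n) ℝ)
    (hoff : ∀ i j, i ≠ j → 0 < Q i j)
    (hnnr : 2 * Real.sqrt n - 2 ≤ (nnRank Q : ℝ))
    (r : ℕ) (P : Fin r → Matrix (Fin n × Fin n) (Fin n × Fin n) ℝ)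
    (hPnn : ∀ k x y, 0 ≤ P k x y)
    (hsum : Q ⊗ₖ Q = ∑ k, P k)
    (hr : (r : ℝ) < Real.logb 2 n) :
    ∀ i j : Fin n, i ≠ j → ∃ k₀ : Fin r,
      3 ≤ (Matrix.of fun x y => P k₀ (i, x) (j, y) : Matrix (Fin n) (Fin n) ℝ).rank := by
  intro i j hij
  by_contra! hlow
  choose a b ha hb hab using fun k => exists_nonneg_factorization_of_rank_le_two
    (Matrix.of fun x y => P k (i, x) (j, y)) (fun x y => hPnn k _ _) (Nat.le_of_lt_succ (hlow k))
  have hQij := hoff i j hij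
  have hle : nnRank Q ≤ Fintype.card (Fin r × Fin 2) := by
    refine nnRank_le_card (fun p x => (Q i j)⁻¹ * a p.1 p.2 x) (fun p y => b p.1 p.2 y)
      (fun p x => mul_nonneg (inv_nonneg.mpr hQij.le) (ha _ _ x)) (fun p y => hb _ _ y)
      fun x y => ?_
    have hblock : Q i j * Q x y = ∑ k, P k (i, x) (j, y) := by
      simpa [Matrix.sum_apply] using congrFun (congrFun hsum (i, x)) (j, y)
    simp only [Fintype.sum_prod_type, mul_assoc, ← mul_sum]
    rw [eq_inv_mul_iff_mul_eq₀ hQij.ne', hblock]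
    exact sum_congr rfl fun k _ => hab k x y
  have hlog := logb_two_le_sqrt_sub_one hn
  have hle_real : (nnRank Q : ℝ) ≤ 2 * r := by
    simpa [mul_comm] using (Nat.cast_le (α := ℝ)).mpr hle
  linarith

theorem stmt15 {n : ℕ} (hn : 64 ≤ n)
    (Q : Matrix (Fin n) (Fin n) ℝ)
    (hdiag : ∀ i, Q i i = 0) (hoff : ∀ i j, i ≠ j → 0 < Q i j)
    (hnnr : 2 * Real.sqrt n - 2 ≤ (nnRank Q : ℝ))
    (r : ℕ) (P : Fin r → Matrix (Fin n × Fin n) (Fin n × Fin n) ℝ)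
    (hPnn : ∀ k x y, 0 ≤ P k x y) (hPrank : ∀ k, prank (P k) ≤ 2)
    (hsum : Q ⊗ₖ Q = ∑ k, P k)
    (hr : (r : ℝ) < Real.logb 2 n) :
    ∀ i j : Fin n, i ≠ j → ∃ k₀ : Fin r,
      3 ≤ (Matrix.of fun x y => P k₀ (i, x) (j, y) : Matrix (Fin n) (Fin n) ℝ).rank :=
  stmt15_general hn Q hoff hnnr r P hPnn hsum hr
end
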